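/- arXiv:2403.07961 — 2 statements merged into one kernel-verified Lean document; each statement's English description precedes it below -/
import Mathlib

section
/- Let p > 1 and a = 1 - 2^{-1/(p+1)}. Define h_{1,1}(x) = ((1-(1-a)^p)/a)·min(x,a), and h_{1,2,(1)}(x) = 1_{[a,1]}(x)·((1-(1-x)^p) - (1-(1-a)^p)). Then ∫₀¹ (h_{1,1}(x) + h_{1,2,(1)}(x)) dx = (1/2)·p/(p+1) + (1 + 2^{p/(p+1)} - 2^{1/(p+1)})/4. -/
/-!
With `t = 1 - a = 2 ^ (-1/(p+1))` we have `t ^ (p+1) = 1/2`. The first summand integrates to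
`(1 - t ^ p) (1 - a/2)`, the second to `(1 - a) t ^ p - t ^ (p+1)/(p+1) = p/(p+1) · t ^ (p+1)`,
and substituting `t ^ p = 1/(2t)`, `2 ^ (p/(p+1)) = 2t`, `2 ^ (1/(p+1)) = 1/t` gives the
closed form.
-/

open Set MeasureTheory intervalIntegral

lemma integral_min_const {a b : ℝ} (ha : 0 ≤ a) (hab : a ≤ b) :
    ∫ x in (0:ℝ)..b, min x a = a * b - a ^ 2 / 2 := by
  have hmin : Continuous fun x : ℝ => min x a := continuous_id.min continuous_const
  have below : ∫ x in (0:ℝ)..a, min x a = ∫ x in (0:ℝ)..a, x :=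
    integral_congr fun x hx => min_eq_left (uIcc_of_le ha ▸ hx).2
  have above : ∫ x in a..b, min x a = ∫ _ in a..b, a :=
    integral_congr fun x hx => min_eq_right (uIcc_of_le hab ▸ hx).1
  rw [← integral_add_adjacent_intervals (hmin.intervalIntegrable 0 a)
      (hmin.intervalIntegrable a b), below, above, integral_id, intervalIntegral.integral_const,
    smul_eq_mul]
  ring

lemma IntervalIntegrable.indicator_Icc {f : ℝ → ℝ} {a b c : ℝ} (hca : c ≤ a)
    (hab : a ≤ b)
    (hf : IntervalIntegrable f volume a b) :
    IntervalIntegrable ((Icc a b).indicator f) volume c b := by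
  rw [intervalIntegrable_iff_integrableOn_Ioc_of_le (hca.trans hab),
    integrableOn_indicator_iff measurableSet_Icc]
  rw [intervalIntegrable_iff_integrableOn_Ioc_of_le hab,
    ← integrableOn_Icc_iff_integrableOn_Ioc] at hf
  exact hf.mono_set inter_subset_left

lemma integral_indicator_Icc {f : ℝ → ℝ} {a b c : ℝ} (hca : c ≤ a) (hab : a ≤ b) :
    ∫ x in c..b, (Icc a b).indicator f x = ∫ x in a..b, f x := by
  have hset : (Ioc c b ∩ Icc a b : Set ℝ) =ᵐ[volume] Ioc a b := by
    refine ae_eq_set.2 ⟨measure_mono_null (fun x hx => ?_) (measure_singleton a), ?_⟩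
    · simp only [mem_sdiff, mem_inter_iff, mem_Ioc, mem_Icc, not_and, not_le] at hx
      exact le_antisymm (not_lt.1 fun h => (hx.2 h).not_ge hx.1.2.2) hx.1.2.1
    · rw [sdiff_eq_empty.2 (subset_inter (Ioc_subset_Ioc_left hca) Ioc_subset_Icc_self),
        measure_empty]
  rw [integral_of_le (hca.trans hab), integral_of_le hab,
    ← MeasureTheory.integral_indicator measurableSet_Ioc,
    ← MeasureTheory.integral_indicator measurableSet_Ioc, indicator_indicator]
  exact integral_congr_ae (indicator_ae_eq_of_ae_eq_set hset)

lemma intervalIntegrable_one_sub_rpow {p : ℝ} (hp : -1 < p) (a : ℝ) :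
    IntervalIntegrable (fun x : ℝ => (1 - x) ^ p) volume a 1 := by
  simpa using (intervalIntegrable_rpow' hp (a := 1 - a) (b := 0)).comp_sub_left 1

lemma integral_one_sub_rpow {p : ℝ} (hp : -1 < p) (a : ℝ) :
    ∫ x in a..1, (1 - x) ^ p = (1 - a) ^ (p + 1) / (p + 1) := by
  rw [intervalIntegral.integral_comp_sub_left (fun u => u ^ p) 1, sub_self,
    integral_rpow (Or.inl hp), Real.zero_rpow (by linarith)]
  ring

lemma rpow_neg_one_div_rpow {x q : ℝ} (hx : 0 ≤ x) (hq : q ≠ 0) :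
    (x ^ (-(1 / q))) ^ q = x⁻¹ := by
  rw [← Real.rpow_mul hx, neg_mul, one_div_mul_cancel hq, Real.rpow_neg_one]

lemma intervalIntegrable_indicator_Icc_one_sub_rpow {p a : ℝ} (hp : -1 < p) (ha0 : 0 ≤ a)
    (ha1 : a ≤ 1) :
    IntervalIntegrable
      ((Icc a 1).indicator fun x => (1 - (1 - x) ^ p) - (1 - (1 - a) ^ p)) volume 0 1 :=
  (intervalIntegrable_const.sub (intervalIntegrable_one_sub_rpow hp a)).sub
    intervalIntegrable_const |>.indicator_Icc ha0 ha1

lemma integral_indicator_Icc_one_sub_rpow {p a : ℝ} (hp : -1 < p) (ha0 : 0 ≤ a)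
    (ha1 : a ≤ 1) :
    ∫ x in (0:ℝ)..1, (Icc a 1).indicator (fun x => (1 - (1 - x) ^ p) - (1 - (1 - a) ^ p)) x
      = p / (p + 1) * (1 - a) ^ (p + 1) := by
  have hp1 : p + 1 ≠ 0 := by linarith
  have hintegrand : ∫ x in a..1, ((1 - (1 - x) ^ p) - (1 - (1 - a) ^ p))
      = ∫ x in a..1, ((1 - a) ^ p - (1 - x) ^ p) :=
    integral_congr fun x _ => by ring
  rw [integral_indicator_Icc ha0 ha1, hintegrand,
    integral_sub intervalIntegrable_const (intervalIntegrable_one_sub_rpow hp a),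
    intervalIntegral.integral_const, integral_one_sub_rpow hp, smul_eq_mul,
    Real.rpow_add_one' (by linarith) hp1]
  field_simp
  ring

theorem integral_h11_plus_h121 (p a : ℝ) (hp : 1 < p)
    (ha : a = 1 - 2 ^ (-(1 / (p + 1))) ) :
    ∫ x in (0:ℝ)..1,
        (((1 - (1 - a) ^ p) / a) * min x a
          + Set.indicator (Set.Icc a 1)
              (fun x => (1 - (1 - x) ^ p) - (1 - (1 - a) ^ p)) x)
      = (1 / 2) * (p / (p + 1)) + (1 + 2 ^ (p / (p + 1)) - 2 ^ (1 / (p + 1))) / 4 := by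
  set t : ℝ := 2 ^ (-(1 / (p + 1))) with ht
  have hp1 : p + 1 ≠ 0 := by linarith
  have ht0 : 0 < t := by positivity
  have ht1 : t < 1 :=
    Real.rpow_lt_one_of_one_lt_of_neg one_lt_two (neg_neg_of_pos (by positivity))
  have hta : 1 - a = t := by rw [ha]; ring
  have ha0 : 0 < a := by linarith
  have ht_pow_succ : t ^ (p + 1) = 1 / 2 := by
    rw [ht, rpow_neg_one_div_rpow zero_le_two hp1, one_div]
  have ht_pow : t ^ p = 1 / (2 * t) := by
    rw [eq_div_iff (by positivity), mul_left_comm, ← Real.rpow_add_one ht0.ne', ht_pow_succ]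
    norm_num
  have h2_pow : (2:ℝ) ^ (p / (p + 1)) = 2 * t := by
    rw [show p / (p + 1) = 1 + -(1 / (p + 1)) by field_simp; ring, Real.rpow_add two_pos,
      Real.rpow_one]
  have h2_pow_inv : (2:ℝ) ^ (1 / (p + 1)) = t⁻¹ := by
    rw [ht, Real.rpow_neg zero_le_two, inv_inv]
  have h11_cont : Continuous fun x : ℝ => (1 - (1 - a) ^ p) / a * min x a := by fun_prop
  rw [integral_add (h11_cont.intervalIntegrable 0 1)
      (intervalIntegrable_indicator_Icc_one_sub_rpow (by linarith) ha0.le (by linarith)),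
    intervalIntegral.integral_const_mul, integral_min_const ha0.le (by linarith),
    integral_indicator_Icc_one_sub_rpow (by linarith) ha0.le (by linarith), hta, ht_pow,
    ht_pow_succ, h2_pow, h2_pow_inv]
  field_simp
  rw [← hta]
  ring
end

section
/- Let p > 1 and β_spline = sup_{y ∈ [0,1]} (1-(1-y)^p)(1 - y/2). Then β_spline < p/(p+1), i.e., the supremum of ∫₀¹ s_y(x) dx over y is strictly less than ∫₀¹ (1-(1-x)^p) dx. -/
/-!
Write `φ x = 1 - (1 - x) ^ p`, which is concave, strictly increasing and vanishes at `0`, with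
`∫₀¹ φ = p / (p + 1)`. For `0 ≤ y < 1` the spline `s_y` is the chord of `φ` from `0` to `y`,
followed by the constant `φ y`. The chord lies below `φ` on `[0, y]` (Hermite–Hadamard), and
`φ y < φ x` on `(y, 1]`, so `φ y * (1 - y / 2) = ∫₀¹ s_y < ∫₀¹ φ`; at `y = 1` the value is
`1 / 2`. Since the supremum over the compact interval `[0, 1]` is attained, it too is below
`p / (p + 1)`.
-/

open Set intervalIntegral

theorem ConcaveOn.add_div_two_mul_le_integral {f : ℝ → ℝ} {a b : ℝ} (hab : a ≤ b)
    (hf : ConcaveOn ℝ (Icc a b) f) (hfc : ContinuousOn f (Icc a b)) :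
    (f a + f b) / 2 * (b - a) ≤ ∫ x in a..b, f x := by
  rcases hab.eq_or_lt with rfl | hab
  · simp
  have hba : 0 < b - a := sub_pos.2 hab
  have hchord : ∀ x ∈ Icc a b, ((b - x) * f a + (x - a) * f b) / (b - a) ≤ f x := by
    intro x hx
    have hx_eq : ((b - x) / (b - a)) • a + ((x - a) / (b - a)) • b = x := by
      simp only [smul_eq_mul]; field_simp; ring
    have := hf.2 (left_mem_Icc.2 hab.le) (right_mem_Icc.2 hab.le)
      (div_nonneg (sub_nonneg.2 hx.2) hba.le) (div_nonneg (sub_nonneg.2 hx.1) hba.le)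
      (by field_simp; ring)
    rw [hx_eq, smul_eq_mul, smul_eq_mul] at this
    exact le_of_eq_of_le (by ring) this
  calc (f a + f b) / 2 * (b - a)
      = ∫ x in a..b, ((b - x) * f a + (x - a) * f b) / (b - a) := by
        rw [integral_div, integral_add, integral_mul_const, integral_mul_const, integral_sub,
          integral_sub, integral_id, integral_const, integral_const]
        · field_simp; ring
        all_goals exact Continuous.intervalIntegrable (by fun_prop) _ _
    _ ≤ ∫ x in a..b, f x :=
      integral_mono_on hab.le (Continuous.intervalIntegrable (by fun_prop) _ _)
        (hfc.intervalIntegrable_of_Icc hab.le) hchord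

theorem StrictMonoOn.sub_mul_lt_integral {f : ℝ → ℝ} {a b : ℝ} (hab : a < b)
    (hf : StrictMonoOn f (Icc a b)) (hfc : ContinuousOn f (Icc a b)) :
    (b - a) * f a < ∫ x in a..b, f x := by
  have hpos : 0 < ∫ x in a..b, (f x - f a) :=
    intervalIntegral_pos_of_pos_on ((hfc.sub continuousOn_const).intervalIntegrable_of_Icc hab.le)
      (fun x hx => sub_pos.2 (hf (left_mem_Icc.2 hab.le) (Ioo_subset_Icc_self hx) hx.1)) hab
  rw [integral_sub (hfc.intervalIntegrable_of_Icc hab.le) intervalIntegrable_const,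
    integral_const, smul_eq_mul] at hpos
  linarith

theorem convexOn_one_sub_rpow {p : ℝ} (hp : 1 ≤ p) :
    ConvexOn ℝ (Iic 1) fun x : ℝ => (1 - x) ^ p := by
  have h := (convexOn_rpow hp).comp_affineMap (AffineMap.lineMap (k := ℝ) (1 : ℝ) (0 : ℝ))
  have hpre : (AffineMap.lineMap (k := ℝ) (1 : ℝ) (0 : ℝ)) ⁻¹' Ici 0 = Iic 1 := by
    ext x; simp [AffineMap.lineMap_apply_ring']
  rw [hpre] at h
  simpa [Function.comp_def, AffineMap.lineMap_apply_ring', neg_add_eq_sub] using h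

theorem concaveOn_one_sub_one_sub_rpow {p : ℝ} (hp : 1 ≤ p) :
    ConcaveOn ℝ (Iic 1) fun x : ℝ => 1 - (1 - x) ^ p :=
  (concaveOn_const 1 (convex_Iic 1)).sub (convexOn_one_sub_rpow hp)

theorem strictMonoOn_one_sub_one_sub_rpow {p : ℝ} (hp : 0 < p) :
    StrictMonoOn (fun x : ℝ => 1 - (1 - x) ^ p) (Iic 1) := fun x _ y hy hxy => by
  have : (1 - y) ^ p < (1 - x) ^ p :=
    Real.rpow_lt_rpow (sub_nonneg.2 hy) (by linarith) hp
  simp only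
  linarith

theorem continuous_one_sub_one_sub_rpow {p : ℝ} (hp : 0 ≤ p) :
    Continuous fun x : ℝ => 1 - (1 - x) ^ p := by
  fun_prop (disch := assumption)

theorem integral_one_sub_one_sub_rpow {p : ℝ} (hp : -1 < p) :
    ∫ x in (0 : ℝ)..1, (1 - (1 - x) ^ p) = p / (p + 1) := by
  have hpow : ∫ x in (0 : ℝ)..1, (1 - x) ^ p = 1 / (p + 1) := by
    rw [integral_comp_sub_left (fun x : ℝ => x ^ p), sub_self, sub_zero,
      integral_rpow (Or.inl hp), Real.one_rpow, Real.zero_rpow (by linarith)]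
    ring
  have hint : IntervalIntegrable (fun x : ℝ => (1 - x) ^ p) MeasureTheory.volume 0 1 := by
    simpa using (intervalIntegral.intervalIntegrable_rpow' (a := 1) (b := 0) hp).comp_sub_left 1
  have hp1 : p + 1 ≠ 0 := by linarith
  rw [integral_sub intervalIntegrable_const hint, hpow, integral_const]
  field_simp
  ring

theorem one_sub_one_sub_rpow_mul_lt {p y : ℝ} (hp : 1 < p) (hy : y ∈ Icc (0 : ℝ) 1) :
    (1 - (1 - y) ^ p) * (1 - y / 2) < p / (p + 1) := by
  rcases hy.2.eq_or_lt with rfl | hy1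
  · norm_num [Real.zero_rpow (by linarith : p ≠ 0)]
    rw [lt_div_iff₀ (by linarith)]
    linarith
  set φ : ℝ → ℝ := fun x => 1 - (1 - x) ^ p
  have hφc : Continuous φ := continuous_one_sub_one_sub_rpow (by linarith)
  have hφ0 : φ 0 = 0 := by simp [φ]
  have hleft : φ y * (y / 2) ≤ ∫ x in (0 : ℝ)..y, φ x := by
    have hconc : ConcaveOn ℝ (Icc 0 y) φ :=
      (concaveOn_one_sub_one_sub_rpow hp.le).subset (fun x hx => hx.2.trans hy.2)
        (convex_Icc 0 y)
    simpa [hφ0, div_mul_eq_mul_div, mul_div_assoc] using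
      hconc.add_div_two_mul_le_integral hy.1 hφc.continuousOn
  have hright : (1 - y) * φ y < ∫ x in y..1, φ x :=
    ((strictMonoOn_one_sub_one_sub_rpow (by linarith)).mono
      Icc_subset_Iic_self).sub_mul_lt_integral hy1 hφc.continuousOn
  calc φ y * (1 - y / 2) = φ y * (y / 2) + (1 - y) * φ y := by ring
    _ < (∫ x in (0 : ℝ)..y, φ x) + ∫ x in y..1, φ x := add_lt_add_of_le_of_lt hleft hright
    _ = p / (p + 1) := by
      rw [integral_add_adjacent_intervals (hφc.intervalIntegrable _ _)
        (hφc.intervalIntegrable _ _)]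
      exact integral_one_sub_one_sub_rpow (by linarith)

theorem spline_beta_lt (p : ℝ) (hp : 1 < p) :
    sSup ((fun y => (1 - (1 - y) ^ p) * (1 - y / 2)) '' Set.Icc (0:ℝ) 1)
      < p / (p + 1) := by
  have hcont : Continuous fun y : ℝ => (1 - (1 - y) ^ p) * (1 - y / 2) :=
    (continuous_one_sub_one_sub_rpow (by linarith)).mul (by fun_prop)
  rw [isCompact_Icc.sSup_lt_iff_of_continuous (nonempty_Icc.2 zero_le_one) hcont.continuousOn]
  exact fun y hy => one_sub_one_sub_rpow_mul_lt hp hy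
end
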